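/- arXiv:1012.5631 — 2 statements merged into one kernel-verified Lean document; each statement's English description precedes it below -/
import Mathlib

section
/- Let p be a prime, S a group, and R a normal subgroup of S with R ≤ S^{(2)}. Assume R^{(2,S)} = R ∩ S^{(3)}. Then every group homomorphism φ : R → ℤ/pℤ whose kernel contains R^{(2,S)} is the restriction to R of a group homomorphism ψ : S^{(2)} → ℤ/pℤ whose kernel contains S^{(3)}. -/
open scoped commutatorElement

/-- The subgroup generated by all `p`-th powers of elements of `H` together with all
commutators `⁅h, g⁆ = h * g * h⁻¹ * g⁻¹` with `h ∈ H` and `g` in the ambient group. -/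
def pStep (p : ℕ) {G : Type*} [Group G] (H : Subgroup G) : Subgroup G :=
  Subgroup.closure ({x : G | ∃ h ∈ H, x = h ^ p} ∪ {x : G | ∃ h ∈ H, ∃ g : G, x = ⁅h, g⁆})

/-- `pSeries p H n` is the filtration `H^{(n,G)}`: `H^{(1,G)} = H` and
`H^{(n+1,G)} = (H^{(n,G)})^p [H^{(n,G)}, G]`.  Taking `H = ⊤` gives the lower
`p`-central series `G^{(n)}` of `G` (with `G^{(1)} = G`). -/
def pSeries (p : ℕ) {G : Type*} [Group G] (H : Subgroup G) : ℕ → Subgroup G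
  | 0 => H
  | 1 => H
  | (n + 2) => pStep p (pSeries p H (n + 1))

/-!
`S^{(2)} / S^{(3)}` is an elementary abelian `p`-group, i.e. a vector space over `ZMod p`. The
hypothesis `R^{(2,S)} = R ∩ S^{(3)}` says exactly that the kernel of `R → S^{(2)} / S^{(3)}` is
`R^{(2,S)}`, so `φ` descends to a homomorphism on the image of `R`, a subspace. Composing with a
linear retraction onto that subspace extends it to all of `S^{(2)} / S^{(3)}`.
-/

theorem pow_mem_pStep {p : ℕ} {G : Type*} [Group G] {H : Subgroup G} {h : G} (hh : h ∈ H) :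
    h ^ p ∈ pStep p H :=
  Subgroup.subset_closure (Or.inl ⟨h, hh, rfl⟩)

theorem commutatorElement_mem_pStep {p : ℕ} {G : Type*} [Group G] {H : Subgroup G} {h : G}
    (hh : h ∈ H) (g : G) : ⁅h, g⁆ ∈ pStep p H :=
  Subgroup.subset_closure (Or.inr ⟨h, hh, g, rfl⟩)

theorem Subgroup.normal_of_commutatorElement_mem {G : Type*} [Group G] {N : Subgroup G}
    (hN : ∀ a b : G, ⁅a, b⁆ ∈ N) : N.Normal :=
  ⟨fun n hn g => by simpa [commutatorElement_def] using N.mul_mem (hN g n) hn⟩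

section ElementaryAbelian

variable {p : ℕ} [Fact p.Prime] {Q : Type*} [CommGroup Q]

theorem Subgroup.exists_retraction_of_pow_eq_one (hQ : ∀ q : Q, q ^ p = 1) (K : Subgroup Q) :
    ∃ r : Q →* K, r.comp K.subtype = MonoidHom.id K := by
  -- `Q` is a `ZMod p`-vector space, and subspaces have complements.
  let : Module (ZMod p) (Additive Q) := AddCommGroup.zmodModule fun x => hQ x.toMul
  let : Module (ZMod p) (Additive K) :=
    AddCommGroup.zmodModule fun x => Subtype.ext (hQ x.toMul)
  let i : Additive K →ₗ[ZMod p] Additive Q := K.subtype.toAdditive.toZModLinearMap p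
  obtain ⟨g, hg⟩ := i.exists_leftInverse_of_injective
    (LinearMap.ker_eq_bot.2 Subtype.val_injective)
  exact ⟨AddMonoidHom.toMultiplicative g.toAddMonoidHom,
    MonoidHom.ext fun k => LinearMap.congr_fun hg (Additive.ofMul k)⟩

theorem MonoidHom.exists_comp_eq_of_ker_le {H M : Type*} [Group H] [Group M]
    (hQ : ∀ q : Q, q ^ p = 1) (f : H →* Q) (φ : H →* M) (hf : f.ker ≤ φ.ker) :
    ∃ ψ : Q →* M, ψ.comp f = φ := by
  obtain ⟨r, hr⟩ := f.range.exists_retraction_of_pow_eq_one hQ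
  let φ' : f.range →* M := f.rangeRestrict.liftOfRightInverse _
    (Function.rightInverse_surjInv f.rangeRestrict_surjective) ⟨φ, by rwa [f.ker_rangeRestrict]⟩
  refine ⟨φ'.comp r, ?_⟩
  calc (φ'.comp r).comp f = φ'.comp ((r.comp f.range.subtype).comp f.rangeRestrict) := rfl
    _ = φ := by rw [hr, MonoidHom.id_comp, MonoidHom.liftOfRightInverse_comp]

end ElementaryAbelian

theorem MonoidHom.exists_comp_eq_of_comap_le_ker {p : ℕ} [Fact p.Prime]
    {G H M : Type*} [Group G] [Group H] [Group M] {N : Subgroup G}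
    (hcomm : ∀ a b : G, ⁅a, b⁆ ∈ N) (hpow : ∀ a : G, a ^ p ∈ N) (f : H →* G) (φ : H →* M)
    (hf : N.comap f ≤ φ.ker) : ∃ ψ : G →* M, N ≤ ψ.ker ∧ ψ.comp f = φ := by
  have := Subgroup.normal_of_commutatorElement_mem hcomm
  let : CommGroup (G ⧸ N) :=
    { mul_comm := fun x y => QuotientGroup.induction_on x fun a =>
        QuotientGroup.induction_on y fun b =>
          QuotientGroup.eq.2 (by simpa [commutatorElement_def, mul_assoc] using hcomm b⁻¹ a⁻¹) }
  have hQ : ∀ q : G ⧸ N, q ^ p = 1 := fun q => QuotientGroup.induction_on q fun a =>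
    (QuotientGroup.eq_one_iff _).2 (hpow a)
  obtain ⟨ψ, hψ⟩ := ((QuotientGroup.mk' N).comp f).exists_comp_eq_of_ker_le hQ φ
    (by rwa [← MonoidHom.comap_ker, QuotientGroup.ker_mk'])
  exact ⟨ψ.comp (QuotientGroup.mk' N),
    fun x hx => by simp [(QuotientGroup.eq_one_iff x).2 hx], hψ⟩

theorem stmt4_general (p : ℕ) (hp : p.Prime) {S : Type*} [Group S] (R : Subgroup S)
    (hR : R ≤ pSeries p (⊤ : Subgroup S) 2)
    (h2 : pSeries p R 2 = R ⊓ pSeries p (⊤ : Subgroup S) 3)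
    (φ : ↥R →* Multiplicative (ZMod p))
    (hφ : (pSeries p R 2).subgroupOf R ≤ φ.ker) :
    ∃ ψ : ↥(pSeries p (⊤ : Subgroup S) 2) →* Multiplicative (ZMod p),
      (pSeries p (⊤ : Subgroup S) 3).subgroupOf (pSeries p (⊤ : Subgroup S) 2) ≤ ψ.ker ∧
      ∀ (x : S) (hx : x ∈ R) (hx2 : x ∈ pSeries p (⊤ : Subgroup S) 2),
        ψ ⟨x, hx2⟩ = φ ⟨x, hx⟩ := by
  have : Fact p.Prime := ⟨hp⟩
  obtain ⟨ψ, hker, hψ⟩ :=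
    MonoidHom.exists_comp_eq_of_comap_le_ker (p := p)
      (N := (pSeries p ⊤ 3).subgroupOf (pSeries p ⊤ 2))
      (fun a b => commutatorElement_mem_pStep a.2 b) (fun a => pow_mem_pStep a.2)
      (Subgroup.inclusion hR) φ
      (fun x hx => hφ (by rw [Subgroup.mem_subgroupOf, h2]; exact ⟨x.2, hx⟩))
  exact ⟨ψ, hker, fun x hx _ => DFunLike.congr_fun hψ ⟨x, hx⟩⟩

/-- Lemma 2.8 (reformulated): if `R` is a normal subgroup of `S` with `R ≤ S^{(2)}` and
`R^{(2,S)} = R ∩ S^{(3)}`, then every homomorphism `φ : R → ℤ/pℤ` killing `R^{(2,S)}`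
is the restriction to `R` of a homomorphism `ψ : S^{(2)} → ℤ/pℤ` killing `S^{(3)}`. -/
theorem stmt4 (p : ℕ) (hp : p.Prime) {S : Type*} [Group S] (R : Subgroup S) [R.Normal]
    (hR : R ≤ pSeries p (⊤ : Subgroup S) 2)
    (h2 : pSeries p R 2 = R ⊓ pSeries p (⊤ : Subgroup S) 3)
    (φ : ↥R →* Multiplicative (ZMod p))
    (hφ : (pSeries p R 2).subgroupOf R ≤ φ.ker) :
    ∃ ψ : ↥(pSeries p (⊤ : Subgroup S) 2) →* Multiplicative (ZMod p),
      (pSeries p (⊤ : Subgroup S) 3).subgroupOf (pSeries p (⊤ : Subgroup S) 2) ≤ ψ.ker ∧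
      ∀ (x : S) (hx : x ∈ R) (hx2 : x ∈ pSeries p (⊤ : Subgroup S) 2),
        ψ ⟨x, hx2⟩ = φ ⟨x, hx⟩ :=
  stmt4_general p hp R hR h2 φ hφ
end

section
/- Let p be a prime, S a topological group, and R a normal subgroup of S with R ≤ S^{(2)}. Assume that each subgroup R^{(n,S)} is closed in S and that for every neighborhood U of the identity there exists n with S^{(n)} ⊆ U. Then the following are equivalent: (A) R^{(n,S)} = R ∩ S^{(n+1)} for all n ≥ 1; (B) R^{(n,S)} ∩ S^{(n+2)} ≤ R^{(n+1,S)} for all n ≥ 1; (C) R ∩ S^{(n+1)} is contained in the subgroup generated by R^{(n,S)} and R ∩ S^{(n+2)}, for all n ≥ 1. -/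
open scoped commutatorElement

/-! (C) ⇒ (A) is the substantial implication. Iterating (C) shows that every element of
`R ∩ S^{(n+1)}` lies in `R^{(n,S)} S^{(m)}` for every `m`; since the `S^{(m)}` shrink to `1`,
such an element lies in the closure of `R^{(n,S)}`, which is `R^{(n,S)}` itself.
The equivalence (A) ⇔ (B) is pure lattice theory of the two filtrations. -/

section Filtration

variable {p : ℕ} {G : Type*} [Group G] {H K : Subgroup G}

lemma pStep_le (hpow : ∀ x ∈ H, x ^ p ∈ K) (hcomm : ∀ x ∈ H, ∀ g : G, ⁅x, g⁆ ∈ K) :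
    pStep p H ≤ K := by
  rw [pStep, Subgroup.closure_le]
  rintro x (⟨h, hh, rfl⟩ | ⟨h, hh, g, rfl⟩)
  · exact hpow h hh
  · exact hcomm h hh g

lemma pStep_mono (h : H ≤ K) : pStep p H ≤ pStep p K :=
  pStep_le (fun x hx => Subgroup.subset_closure (Or.inl ⟨x, h hx, rfl⟩))
    (fun x hx g => Subgroup.subset_closure (Or.inr ⟨x, h hx, g, rfl⟩))

lemma pStep_le_self [hH : H.Normal] : pStep p H ≤ H :=
  pStep_le (fun x hx => pow_mem hx p) fun x hx g => by
    rw [commutatorElement_def, mul_assoc, mul_assoc]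
    exact mul_mem hx (by simpa only [mul_assoc] using hH.conj_mem _ (inv_mem hx) g)

instance pStep_normal [hH : H.Normal] : (pStep p H).Normal := by
  constructor
  intro x hx g
  induction hx using Subgroup.closure_induction with
  | mem y hy =>
    apply Subgroup.subset_closure
    rcases hy with ⟨a, ha, rfl⟩ | ⟨a, ha, b, rfl⟩
    · exact Or.inl ⟨g * a * g⁻¹, hH.conj_mem a ha g, (conj_pow ..).symm⟩
    · exact Or.inr ⟨g * a * g⁻¹, hH.conj_mem a ha g, g * b * g⁻¹,
        conjugate_commutatorElement ..⟩
  | one => simp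
  | mul a b _ _ iha ihb => simpa only [mul_assoc, inv_mul_cancel_left] using mul_mem iha ihb
  | inv a _ iha => simpa only [mul_inv_rev, inv_inv, mul_assoc] using inv_mem iha

instance pSeries_normal [H.Normal] : ∀ n, (pSeries p H n).Normal
  | 0 | 1 => inferInstanceAs H.Normal
  | n + 2 => haveI : (pSeries p H (n + 1)).Normal := pSeries_normal (n + 1); pStep_normal

lemma pSeries_antitone [H.Normal] : Antitone (pSeries p H) :=
  antitone_nat_of_succ_le fun
    | 0 => le_rfl
    | _ + 1 => pStep_le_self

lemma pSeries_le_self [H.Normal] (n : ℕ) : pSeries p H n ≤ H :=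
  pSeries_antitone (p := p) (Nat.zero_le n)

lemma pSeries_le_pSeries_succ (hHK : H ≤ pSeries p K 2) {n : ℕ} (hn : 1 ≤ n) :
    pSeries p H n ≤ pSeries p K (n + 1) := by
  induction n, hn using Nat.le_induction with
  | base => exact hHK
  | succ n hn ih =>
    obtain ⟨m, rfl⟩ := Nat.exists_eq_add_of_le' hn
    exact pStep_mono ih

end Filtration

open Pointwise in
lemma Subgroup.mem_of_forall_mem_sup_of_isClosed {G : Type*} [Group G] [TopologicalSpace G]
    [IsTopologicalGroup G] {K : Subgroup G} (hK : IsClosed (K : Set G))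
    {N : ℕ → Subgroup G} [∀ m, (N m).Normal] (hN : ∀ U ∈ nhds (1 : G), ∃ m, (N m : Set G) ⊆ U)
    {x : G} (hx : ∀ m, x ∈ K ⊔ N m) : x ∈ K := by
  rw [← SetLike.mem_coe, ← hK.closure_eq, mem_closure_iff_nhds_one]
  intro U hU
  obtain ⟨m, hm⟩ := hN U hU
  have hxm : x ∈ (N m : Set G) * (K : Set G) := by
    rw [← Subgroup.normal_mul, sup_comm]
    exact hx m
  obtain ⟨a, ha, k, hk, rfl⟩ := hxm
  refine ⟨k, hk, hm ?_⟩
  simpa only [div_eq_mul_inv, mul_inv_rev, mul_inv_cancel_left, SetLike.mem_coe] using inv_mem ha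

section RelativeSeries

variable {p : ℕ} {G : Type*} [Group G] {R : Subgroup G} [R.Normal]

lemma pSeries_le_inf_pSeries_top (hR : R ≤ pSeries p ⊤ 2) {n : ℕ} (hn : 1 ≤ n) :
    pSeries p R n ≤ R ⊓ pSeries p ⊤ (n + 1) :=
  le_inf (pSeries_le_self n) (pSeries_le_pSeries_succ hR hn)

lemma pSeries_eq_inf_of_inf_le (hR : R ≤ pSeries p ⊤ 2)
    (hinj : ∀ n, 1 ≤ n → pSeries p R n ⊓ pSeries p ⊤ (n + 2) ≤ pSeries p R (n + 1))
    {n : ℕ} (hn : 1 ≤ n) : pSeries p R n = R ⊓ pSeries p ⊤ (n + 1) := by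
  induction n, hn using Nat.le_induction with
  | base => exact le_antisymm (pSeries_le_inf_pSeries_top hR le_rfl) inf_le_left
  | succ n hn ih =>
    refine le_antisymm (pSeries_le_inf_pSeries_top hR (by omega)) ?_
    calc R ⊓ pSeries p ⊤ (n + 2)
        = R ⊓ pSeries p ⊤ (n + 1) ⊓ pSeries p ⊤ (n + 2) := by
          rw [inf_assoc, inf_eq_right.2 (pSeries_antitone (Nat.le_succ _))]
      _ = pSeries p R n ⊓ pSeries p ⊤ (n + 2) := by rw [ih]
      _ ≤ pSeries p R (n + 1) := hinj n hn

lemma inf_pSeries_top_le_sup_inf_pSeries_top_add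
    (hsurj : ∀ n, 1 ≤ n → R ⊓ pSeries p ⊤ (n + 1) ≤ pSeries p R n ⊔ (R ⊓ pSeries p ⊤ (n + 2)))
    {n : ℕ} (hn : 1 ≤ n) (k : ℕ) :
    R ⊓ pSeries p ⊤ (n + 1) ≤ pSeries p R n ⊔ (R ⊓ pSeries p ⊤ (n + 1 + k)) := by
  induction k with
  | zero => exact le_sup_right
  | succ k ih =>
    refine ih.trans (sup_le le_sup_left ?_)
    calc R ⊓ pSeries p ⊤ (n + 1 + k)
        ≤ pSeries p R (n + k) ⊔ (R ⊓ pSeries p ⊤ (n + k + 2)) := by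
          simpa only [Nat.add_right_comm] using hsurj (n + k) (by omega)
      _ ≤ pSeries p R n ⊔ (R ⊓ pSeries p ⊤ (n + 1 + (k + 1))) := by
          rw [show n + k + 2 = n + 1 + (k + 1) by omega]
          exact sup_le_sup_right (pSeries_antitone (Nat.le_add_right n k)) _

end RelativeSeries

theorem stmt5_general (p : ℕ) {S : Type*} [Group S] [TopologicalSpace S]
    [IsTopologicalGroup S] (R : Subgroup S) [R.Normal]
    (hR : R ≤ pSeries p (⊤ : Subgroup S) 2)
    (hclosed : ∀ n : ℕ, IsClosed (pSeries p R n : Set S))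
    (hbasis : ∀ U ∈ nhds (1 : S), ∃ n : ℕ, (pSeries p (⊤ : Subgroup S) n : Set S) ⊆ U) :
    List.TFAE
      [ ∀ n : ℕ, 1 ≤ n → pSeries p R n = R ⊓ pSeries p (⊤ : Subgroup S) (n + 1),
        ∀ n : ℕ, 1 ≤ n →
          pSeries p R n ⊓ pSeries p (⊤ : Subgroup S) (n + 2) ≤ pSeries p R (n + 1),
        ∀ n : ℕ, 1 ≤ n →
          R ⊓ pSeries p (⊤ : Subgroup S) (n + 1) ≤
            pSeries p R n ⊔ (R ⊓ pSeries p (⊤ : Subgroup S) (n + 2)) ] := by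
  tfae_have 1 → 2 := fun hA n hn => by
    rw [hA n hn, hA (n + 1) (by omega), inf_assoc]
    exact inf_le_inf_left R inf_le_right
  tfae_have 2 → 1 := fun hB n hn => pSeries_eq_inf_of_inf_le hR hB hn
  tfae_have 1 → 3 := fun hA n hn => hA n hn ▸ le_sup_left
  tfae_have 3 → 1 := fun hC n hn => by
    refine le_antisymm (pSeries_le_inf_pSeries_top hR hn) fun x hx => ?_
    refine Subgroup.mem_of_forall_mem_sup_of_isClosed (hclosed n) hbasis fun m => ?_
    refine sup_le_sup_left (inf_le_right.trans (pSeries_antitone ?_)) _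
      (inf_pSeries_top_le_sup_inf_pSeries_top_add hC hn m hx)
    omega
  tfae_finish

/-- Theorem 3.1 (Theorem `equiv`): let `S` be a topological group, `R` a normal subgroup
with `R ≤ S^{(2)}`, such that each `R^{(n,S)}` is closed and the subgroups `S^{(n)}` form a
neighborhood basis at `1` (every neighborhood of `1` contains some `S^{(n)}`).  Then the
following are equivalent:
(A) `R^{(n,S)} = R ∩ S^{(n+1)}` for all `n ≥ 1`;
(B) `R^{(n,S)} ∩ S^{(n+2)} ≤ R^{(n+1,S)}` for all `n ≥ 1` (injectivity of `ι`);
(C) `R ∩ S^{(n+1)} ≤ ⟨R^{(n,S)}, R ∩ S^{(n+2)}⟩` for all `n ≥ 1` (surjectivity of `ι`). -/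
theorem stmt5 (p : ℕ) (hp : p.Prime) {S : Type*} [Group S] [TopologicalSpace S]
    [IsTopologicalGroup S] (R : Subgroup S) [R.Normal]
    (hR : R ≤ pSeries p (⊤ : Subgroup S) 2)
    (hclosed : ∀ n : ℕ, IsClosed (pSeries p R n : Set S))
    (hbasis : ∀ U ∈ nhds (1 : S), ∃ n : ℕ, (pSeries p (⊤ : Subgroup S) n : Set S) ⊆ U) :
    List.TFAE
      [ ∀ n : ℕ, 1 ≤ n → pSeries p R n = R ⊓ pSeries p (⊤ : Subgroup S) (n + 1),
        ∀ n : ℕ, 1 ≤ n →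
          pSeries p R n ⊓ pSeries p (⊤ : Subgroup S) (n + 2) ≤ pSeries p R (n + 1),
        ∀ n : ℕ, 1 ≤ n →
          R ⊓ pSeries p (⊤ : Subgroup S) (n + 1) ≤
            pSeries p R n ⊔ (R ⊓ pSeries p (⊤ : Subgroup S) (n + 2)) ] :=
  stmt5_general p R hR hclosed hbasis
end
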